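/- arXiv:2002.08428 — 3 statements merged into one kernel-verified Lean document; each statement's English description precedes it below -/
import Mathlib

section
/- Suppose all storage sizes l_i lie strictly inside [0,L] at the optimum (interior case, Ñ = n). Then the optimal storage size is l_i = T + (ln W_i - Σ_{j=1}^n p_j ln W_j)/ln r, which satisfies Σ_{i=1}^n p_i l_i = T. -/
/-!
Writing `S = ∑ p_j log W_j`, the allocation `l` makes every weighted cost `W_i r^(-l_i)` equal to
the same constant `exp S · r^(-T)`. For any feasible `m`, this constant is exactly the weighted
geometric mean `∏ (W_i r^(-m_i))^(p_i)`, so the weighted AM–GM inequality shows that `l` is optimal.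
-/

open Finset Real

section

variable {ι : Type*} [Fintype ι] {p : ι → ℝ}

theorem sum_mul_sub_weightedMean (hsum : ∑ i, p i = 1) (x : ι → ℝ) :
    ∑ i, p i * (x i - ∑ j, p j * x j) = 0 := by
  simp only [mul_sub, sum_sub_distrib, ← sum_mul, hsum, one_mul, sub_self]

theorem sum_mul_add_sub_weightedMean_div (hsum : ∑ i, p i = 1) (x : ι → ℝ) (T c : ℝ) :
    ∑ i, p i * (T + (x i - ∑ j, p j * x j) / c) = T := by
  simp only [mul_add, mul_div_assoc', sum_add_distrib, ← sum_div, ← sum_mul, hsum, one_mul,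
    sum_mul_sub_weightedMean hsum, zero_div, add_zero]

theorem prod_mul_rpow_neg_rpow {W : ι → ℝ} (hW : ∀ i, 0 < W i) {r : ℝ} (hr : 0 < r)
    (m : ι → ℝ) :
    ∏ i, (W i * r ^ (-m i)) ^ p i = exp (∑ i, p i * log (W i)) * r ^ (-∑ i, p i * m i) := by
  have hterm : ∀ i, (W i * r ^ (-m i)) ^ p i = exp (p i * log (W i)) * r ^ (-(p i * m i)) := by
    intro i
    rw [mul_rpow (hW i).le (rpow_nonneg hr.le _), ← rpow_mul hr.le, rpow_def_of_pos (hW i),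
      mul_comm (log (W i))]
    ring_nf
  simp only [hterm, prod_mul_distrib, ← exp_sum, ← rpow_sum_of_pos hr, sum_neg_distrib]

end

theorem mul_rpow_neg_add_sub_div_log {w r : ℝ} (hw : 0 < w) (hr : 0 < r) (hr1 : r ≠ 1)
    (S T : ℝ) : w * r ^ (-(T + (log w - S) / log r)) = exp S * r ^ (-T) := by
  have hlog : log r ≠ 0 := log_ne_zero_of_pos_of_ne_one hr hr1
  rw [rpow_def_of_pos hr, rpow_def_of_pos hr, ← exp_log hw, ← exp_add, ← exp_add, log_exp]
  congr 1
  field_simp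
  ring

theorem stmt_8 (n : ℕ) (p W : Fin n → ℝ)
    (hp : ∀ i, 0 < p i) (hsum : ∑ i, p i = 1) (hW : ∀ i, 0 < W i)
    (r T : ℝ) (hr : 1 < r)
    (l : Fin n → ℝ)
    (hl : ∀ i, l i = T + (Real.log (W i) - ∑ j, p j * Real.log (W j)) / Real.log r) :
    (∑ i, p i * l i = T) ∧
    ∀ m : Fin n → ℝ, (∑ i, p i * m i = T) →
      ∑ i, p i * W i * r ^ (-(l i)) ≤ ∑ i, p i * W i * r ^ (-(m i)) := by
  have hr0 : 0 < r := zero_lt_one.trans hr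
  set S := ∑ j, p j * log (W j)
  have hconst : ∀ i, W i * r ^ (-(l i)) = exp S * r ^ (-T) := fun i => by
    rw [hl i, mul_rpow_neg_add_sub_div_log (hW i) hr0 hr.ne']
  refine ⟨by simpa only [hl] using sum_mul_add_sub_weightedMean_div hsum _ T _, fun m hm => ?_⟩
  calc ∑ i, p i * W i * r ^ (-(l i))
      = exp S * r ^ (-T) := by simp only [mul_assoc, hconst, ← sum_mul, hsum, one_mul]
    _ = ∏ i, (W i * r ^ (-m i)) ^ p i := by rw [prod_mul_rpow_neg_rpow hW hr0, hm]
    _ ≤ ∑ i, p i * (W i * r ^ (-m i)) :=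
        geom_mean_le_arith_mean_weighted _ _ _ (fun i _ => (hp i).le) hsum
          (fun i _ => (mul_pos (hW i) (rpow_pos_of_pos hr0 _)).le)
    _ = ∑ i, p i * W i * r ^ (-(m i)) := by simp only [mul_assoc]
end

section
/- With MIM weights W_i = e^{ϖ(1-p_i)}/Σ_j e^{ϖ(1-p_j)}, the interior optimal storage size is l_i = T + (ϖ/ln r)(γ_p - p_i), where γ_p = Σ_{j=1}^n p_j^2. In particular l_i = T whenever p_i = γ_p. -/
open Finset Real

theorem stmt_9 (n : ℕ) (p : Fin n → ℝ)
    (hp : ∀ i, 0 ≤ p i) (hsum : ∑ i, p i = 1)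
    (ϖ r T : ℝ) (hr : 1 < r) (hT : 0 ≤ T)
    (W : Fin n → ℝ)
    (hW : ∀ i, W i = Real.exp (ϖ * (1 - p i)) / ∑ j, Real.exp (ϖ * (1 - p j))) :
    ∀ i, T + (Real.log (W i) - ∑ j, p j * Real.log (W j)) / Real.log r
        = T + (ϖ / Real.log r) * ((∑ j, (p j) ^ 2) - p i) ∧
      (p i = ∑ j, (p j) ^ 2 →
        T + (Real.log (W i) - ∑ j, p j * Real.log (W j)) / Real.log r = T) := by
  intro i
  have hn : (Finset.univ : Finset (Fin n)).Nonempty := ⟨i, Finset.mem_univ i⟩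
  set S := ∑ j, Real.exp (ϖ * (1 - p j)) with hS
  have hSpos : 0 < S := Finset.sum_pos (fun j _ => Real.exp_pos _) hn
  have hlog : ∀ j, Real.log (W j) = ϖ * (1 - p j) - Real.log S := by
    intro j
    rw [hW j, Real.log_div (Real.exp_ne_zero _) (ne_of_gt hSpos), Real.log_exp]
  have h2 : ∑ j, p j * Real.log (W j)
      = ϖ * (∑ j, p j) - ϖ * ∑ j, (p j) ^ 2 - Real.log S * ∑ j, p j := by
    rw [Finset.sum_congr rfl (fun j _ => by rw [hlog j]; ring :
      ∀ j ∈ Finset.univ, p j * Real.log (W j)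
        = ϖ * p j - ϖ * (p j) ^ 2 - Real.log S * p j)]
    rw [Finset.sum_sub_distrib, Finset.sum_sub_distrib, ← Finset.mul_sum,
      ← Finset.mul_sum, ← Finset.mul_sum]
  have key : Real.log (W i) - ∑ j, p j * Real.log (W j)
      = ϖ * ((∑ j, (p j) ^ 2) - p i) := by
    rw [h2, hlog i, hsum]; ring
  constructor
  · rw [key]; ring
  · intro h
    rw [key, h, sub_self, mul_zero, zero_div, add_zero]
end

section
/- Define the RWRE D_r(ϖ) = [e^{ϖ(1-γ_p)} r^{L-T} / ((r^L - 1) Σ_{i=1}^n p_i e^{ϖ(1-p_i)})] - 1/(r^L - 1) (interior case with l_i = T + (ϖ/ln r)(γ_p - p_i)). Then D_r(0) = (r^{L-T} - 1)/(r^L - 1) and D_r(ϖ) ≤ D_r(0) for all ϖ, i.e., ϖ = 0 maximizes the RWRE. -/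
open Finset Real

theorem stmt_12 (n : ℕ) (p : Fin n → ℝ)
    (hp : ∀ i, 0 ≤ p i) (hsum : ∑ i, p i = 1)
    (r L T : ℝ) (hr : 1 < r) (hT0 : 0 ≤ T) (hTL : T ≤ L)
    (Dr : ℝ → ℝ)
    (hDr : ∀ ϖ, Dr ϖ =
      Real.exp (ϖ * (1 - ∑ i, (p i) ^ 2)) * r ^ (L - T) /
        ((r ^ L - 1) * ∑ i, p i * Real.exp (ϖ * (1 - p i))) - 1 / (r ^ L - 1)) :
    Dr 0 = (r ^ (L - T) - 1) / (r ^ L - 1) ∧ ∀ ϖ, Dr ϖ ≤ Dr 0 := by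
  have hr0 : (0:ℝ) < r := lt_trans one_pos hr
  have hS0 : (∑ i, p i * Real.exp (0 * (1 - p i))) = 1 := by
    simpa using hsum
  have hD0 : Dr 0 = (r ^ (L - T) - 1) / (r ^ L - 1) := by
    rw [hDr 0, hS0]
    simp [div_sub_div_same, sub_div]
  refine ⟨hD0, fun ϖ => ?_⟩
  -- Jensen
  have hS : ∀ ϖ, Real.exp (ϖ * (1 - ∑ i, (p i)^2)) ≤ ∑ i, p i * Real.exp (ϖ * (1 - p i)) := by
    intro ϖ
    have h := convexOn_exp.map_sum_le (t := Finset.univ) (w := p)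
      (p := fun i => ϖ * (1 - p i)) (fun i _ => hp i) (by simpa using hsum)
      (fun i _ => Set.mem_univ _)
    simp only [smul_eq_mul] at h
    have heq : ∑ i, p i * (ϖ * (1 - p i)) = ϖ * (1 - ∑ i, (p i)^2) := by
      calc ∑ i, p i * (ϖ * (1 - p i)) = ∑ i, ϖ * (p i - (p i)^2) := by
            apply Finset.sum_congr rfl; intro i _; ring
        _ = ϖ * ∑ i, (p i - (p i)^2) := (Finset.mul_sum _ _ _).symm
        _ = ϖ * (1 - ∑ i, (p i)^2) := by rw [Finset.sum_sub_distrib, hsum]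
    rw [heq] at h
    exact h
  by_cases hL : r ^ L - 1 = 0
  · rw [hDr, hDr, hL]
    simp
  · have hL' : 0 < r ^ L - 1 := by
      rcases lt_or_eq_of_le (Real.one_le_rpow hr.le (hT0.trans hTL)) with h | h
      · linarith
      · exact absurd (by linarith : r ^ L - 1 = 0) hL
    have hSpos : 0 < ∑ i, p i * Real.exp (ϖ * (1 - p i)) := by
      calc (0:ℝ) < Real.exp (ϖ * (1 - ∑ i, (p i)^2)) := Real.exp_pos _
        _ ≤ _ := hS ϖ
    have hR : (0:ℝ) < r ^ (L - T) := Real.rpow_pos_of_pos hr0 _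
    rw [hDr ϖ, hDr 0, hS0]
    have h1 : Real.exp (ϖ * (1 - ∑ i, (p i)^2)) * r ^ (L - T) /
        ((r ^ L - 1) * ∑ i, p i * Real.exp (ϖ * (1 - p i)))
        ≤ Real.exp (0 * (1 - ∑ i, (p i)^2)) * r ^ (L - T) / ((r ^ L - 1) * 1) := by
      rw [div_le_div_iff₀ (by positivity) (by positivity)]
      have := hS ϖ
      have hE0 : Real.exp (0 * (1 - ∑ i, (p i)^2)) = 1 := by simp
      rw [hE0]
      nlinarith [mul_le_mul_of_nonneg_right (hS ϖ) (le_of_lt (mul_pos hR hL'))]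
    linarith
end
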